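/- arXiv:1102.2536 — 2 statements merged into one kernel-verified Lean document; each statement's English description precedes it below -/
import Mathlib

section
/- Let Q₀ be a probability measure on ℝ with mean 0, variance 1 and finite, strictly positive third moment E_{Q₀}[X³] > 0, such that Z(β) = ∫ exp(βx) dQ₀(x) < ∞ for all β in an open interval Γ containing 0; for β ∈ Γ let Q_β be the probability measure with dQ_β/dQ₀ = exp(βx)/Z(β), with mean μ_β. Then there exists ε > 0 such that for every β ∈ Γ with μ_β ∈ [−ε, 0], one has D(Q_β‖Q₀) ≥ μ_β²/2. -/
/-!
Write `Q_β = Q₀.tilted (β * ·)`, `Λ = log Z` for the cumulant generating function and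
`m = μ_β`. Then `D(Q_β‖Q₀) = β m - Λ β`, and Jensen's inequality for `exp` under `Q_β` gives
the Gibbs variational bound `u m - Λ u ≤ β m - Λ β` for every `u` with `Z u < ∞`; take `u = m`.
It remains to see `Λ m ≤ m² / 2` for small `m ≤ 0`. By Taylor, `Z m = 1 + Z''(ξ) m² / 2` for
some `ξ ∈ (m, 0)`, and `Z''(ξ) < Z''(0) = E[X²] = 1` because `Z'''(0) = E[X³] > 0`.
-/

open MeasureTheory ProbabilityTheory Real

/- Kullback-Leibler divergence `D(P‖Q)`: equal to `∫ log(dP/dQ) dP` when `P ≪ Q` and the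
integrand is `P`-integrable, and `+∞` otherwise. -/
open Classical in
noncomputable def klDiv {Ω : Type*} [MeasurableSpace Ω] (P Q : Measure Ω) : EReal :=
  if P ≪ Q ∧ Integrable (fun ω => Real.log (P.rnDeriv Q ω).toReal) P
  then ((∫ ω, Real.log (P.rnDeriv Q ω).toReal ∂P : ℝ) : EReal)
  else ⊤

open Set Filter Topology

lemma HasDerivAt.eventually_nhdsLT_lt_of_pos {f : ℝ → ℝ} {f' x : ℝ} (hf : HasDerivAt f f' x)
    (hf' : 0 < f') : ∀ᶠ y in 𝓝[<] x, f y < f x := by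
  have hslope : ∀ᶠ y in 𝓝[<] x, 0 < slope f x y :=
    (hf.tendsto_slope.mono_left (nhdsWithin_mono _ fun _ ↦ ne_of_lt)).eventually
      (lt_mem_nhds hf')
  filter_upwards [hslope, self_mem_nhdsWithin] with y hy (hyx : y < x)
  rw [slope_def_field, ← neg_div_neg_eq, neg_sub, neg_sub,
    div_pos_iff_of_pos_right (sub_pos.2 hyx)] at hy
  exact sub_pos.1 hy

section TiltedMul

variable {Ω : Type*} {mΩ : MeasurableSpace Ω} {μ : Measure Ω} {X : Ω → ℝ}

lemma klDiv_tilted_mul [IsProbabilityMeasure μ] {t : ℝ}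
    (ht : t ∈ interior (integrableExpSet X μ)) :
    klDiv (μ.tilted (t * X ·)) μ =
      ((t * (μ.tilted (t * X ·))[X] - cgf X μ t : ℝ) : EReal) := by
  have hexp : Integrable (fun ω ↦ exp (t * X ω)) μ :=
    integrable_of_mem_integrableExpSet (interior_subset ht)
  have hllr : (fun ω ↦ log ((μ.tilted (t * X ·)).rnDeriv μ ω).toReal)
      =ᵐ[μ.tilted (t * X ·)] fun ω ↦ t * X ω - cgf X μ t :=
    (tilted_absolutelyContinuous μ _).ae_le (log_rnDeriv_tilted_left_self hexp)
  have hX : Integrable X (μ.tilted (t * X ·)) := (memLp_tilted_mul ht 1).integrable le_rfl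
  have := isProbabilityMeasure_tilted hexp
  have hint : Integrable (fun ω ↦ t * X ω - cgf X μ t) (μ.tilted (t * X ·)) :=
    (hX.const_mul t).sub (integrable_const _)
  rw [klDiv, if_pos ⟨tilted_absolutelyContinuous μ _, hint.congr hllr.symm⟩,
    integral_congr_ae hllr, integral_sub (hX.const_mul t) (integrable_const _),
    integral_const_mul, integral_const, probReal_univ, one_smul]

lemma mul_integral_tilted_sub_cgf_le [IsProbabilityMeasure μ] {t u : ℝ}
    (ht : t ∈ interior (integrableExpSet X μ)) (hu : u ∈ integrableExpSet X μ) :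
    u * (μ.tilted (t * X ·))[X] - cgf X μ u ≤ t * (μ.tilted (t * X ·))[X] - cgf X μ t := by
  have hexp : Integrable (fun ω ↦ exp (t * X ω)) μ :=
    integrable_of_mem_integrableExpSet (interior_subset ht)
  have := isProbabilityMeasure_tilted hexp
  have hX : Integrable X (μ.tilted (t * X ·)) := (memLp_tilted_mul ht 1).integrable le_rfl
  have hratio :
      ∫ ω, exp ((u - t) * X ω) ∂(μ.tilted (t * X ·)) = mgf X μ u / mgf X μ t := by
    simp_rw [integral_exp_tilted, Pi.add_apply, ← add_mul, add_sub_cancel]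
    rfl
  have hjensen : exp ((u - t) * (μ.tilted (t * X ·))[X]) ≤ mgf X μ u / mgf X μ t := by
    rw [← hratio, ← integral_const_mul]
    refine convexOn_exp.map_integral_le continuousOn_exp isClosed_univ
      (Eventually.of_forall fun _ ↦ mem_univ _) (hX.const_mul _) ?_
    refine (integrable_tilted_iff hexp _).2 (hu.congr (Eventually.of_forall fun ω ↦ ?_))
    simp only [Function.comp_apply, smul_eq_mul, ← exp_add]
    ring_nf
  have hlog := log_le_log (exp_pos _) hjensen
  rw [log_exp, log_div (mgf_pos hu).ne' (mgf_pos hexp).ne'] at hlog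
  unfold cgf
  linarith

lemma eventually_nhdsLE_mgf_le [IsProbabilityMeasure μ]
    (h0 : 0 ∈ interior (integrableExpSet X μ)) (hmean : μ[X] = 0) (hthird : 0 < μ[X ^ 3]) :
    ∀ᶠ t in 𝓝[≤] 0, mgf X μ t ≤ 1 + μ[X ^ 2] * t ^ 2 / 2 := by
  have hM3 : HasDerivAt (iteratedDeriv 2 (mgf X μ)) μ[X ^ 3] 0 := by
    simpa using hasDerivAt_iteratedDeriv_mgf h0 2
  have hlt : ∀ᶠ s in 𝓝[<] 0, iteratedDeriv 2 (mgf X μ) s < μ[X ^ 2] :=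
    iteratedDeriv_mgf_zero h0 2 ▸ hM3.eventually_nhdsLT_lt_of_pos hthird
  obtain ⟨l, hl0, hl⟩ := mem_nhdsLT_iff_exists_Ioo_subset.1
    (hlt.and (nhdsWithin_le_nhds (isOpen_interior.mem_nhds h0)))
  filter_upwards [Ioc_mem_nhdsLE hl0] with t ht
  rcases ht.2.eq_or_lt with rfl | htneg
  · simp
  have hsub : uIcc 0 t ⊆ interior (integrableExpSet X μ) := by
    rw [uIcc_of_ge htneg.le]
    intro s hs
    rcases hs.2.eq_or_lt with rfl | hs0
    · exact h0
    · exact (hl ⟨ht.1.trans_le hs.1, hs0⟩).2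
  obtain ⟨ξ, hξ, htaylor⟩ := taylor_mean_remainder_lagrange_iteratedDeriv (n := 1) htneg.ne'
    ((analyticOn_mgf.mono hsub).contDiffOn (uniqueDiffOn_uIcc htneg.ne'))
  have hd : derivWithin (mgf X μ) (uIcc 0 t) 0 = 0 := by
    rw [(analyticAt_mgf h0).differentiableAt.derivWithin
      (uniqueDiffOn_uIcc htneg.ne' 0 left_mem_uIcc), deriv_mgf_zero h0, hmean]
  rw [uIoo_of_ge htneg.le] at hξ
  have hξ2 := (hl ⟨ht.1.trans hξ.1, hξ.2⟩).1
  simp only [taylorWithinEval_succ, taylor_within_zero_eval, mgf_zero', probReal_univ,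
    CharP.cast_eq_zero, zero_add, Nat.factorial_zero, Nat.cast_one, mul_one, inv_one, sub_zero,
    pow_one, one_mul, iteratedDerivWithin_one, hd, smul_eq_mul, mul_zero, add_zero, Nat.reduceAdd,
    Nat.factorial_two, Nat.cast_ofNat] at htaylor
  nlinarith [mul_le_mul_of_nonneg_right hξ2.le (sq_nonneg t)]

lemma eventually_nhdsLE_cgf_le [IsProbabilityMeasure μ]
    (h0 : 0 ∈ interior (integrableExpSet X μ)) (hmean : μ[X] = 0) (hthird : 0 < μ[X ^ 3]) :
    ∀ᶠ t in 𝓝[≤] 0, cgf X μ t ≤ μ[X ^ 2] * t ^ 2 / 2 := by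
  filter_upwards [eventually_nhdsLE_mgf_le h0 hmean hthird,
    nhdsWithin_le_nhds (isOpen_interior.mem_nhds h0)] with t hmgf ht
  calc cgf X μ t = log (mgf X μ t) := rfl
  _ ≤ mgf X μ t - 1 :=
    log_le_sub_one_of_pos (mgf_pos (integrable_of_mem_integrableExpSet (interior_subset ht)))
  _ ≤ μ[X ^ 2] * t ^ 2 / 2 := by linarith

end TiltedMul

theorem stmt_10_general
    (Q₀ : Measure ℝ) [IsProbabilityMeasure Q₀]
    (hmean : ∫ x, x ∂Q₀ = 0)
    (hvar : variance id Q₀ = 1)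
    (hthird : 0 < ∫ x, x ^ 3 ∂Q₀)
    (Γ : Set ℝ) (hΓopen : IsOpen Γ) (h0Γ : (0 : ℝ) ∈ Γ)
    (hZ : ∀ β ∈ Γ, Integrable (fun x => Real.exp (β * x)) Q₀)
    (Q : ℝ → Measure ℝ)
    (hQ : ∀ β ∈ Γ, Q β = Q₀.withDensity (fun x =>
      ENNReal.ofReal (Real.exp (β * x) / ∫ y, Real.exp (β * y) ∂Q₀)))
    (μ : ℝ → ℝ) (hμ : ∀ β ∈ Γ, μ β = ∫ x, x ∂(Q β)) :
    ∃ ε > 0, ∀ β ∈ Γ, μ β ∈ Set.Icc (-ε) 0 →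
      (((μ β) ^ 2 / 2 : ℝ) : EReal) ≤ klDiv (Q β) Q₀ := by
  have hΓ : Γ ⊆ interior (integrableExpSet id Q₀) := interior_maximal hZ hΓopen
  have hsecond : Q₀[id ^ 2] = 1 := by
    rw [← hvar, variance_of_integral_eq_zero aemeasurable_id hmean]
    rfl
  obtain ⟨l, hl0, hl⟩ := mem_nhdsLE_iff_exists_Icc_subset.1
    ((eventually_nhdsLE_cgf_le (hΓ h0Γ) hmean hthird).and
      (nhdsWithin_le_nhds (hΓopen.mem_nhds h0Γ)))
  refine ⟨-l, neg_pos.2 hl0, fun β hβ hβm => ?_⟩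
  have hQβ : Q β = Q₀.tilted (β * id ·) := hQ β hβ
  have hμβ : μ β = (Q₀.tilted (β * id ·))[id] := by rw [hμ β hβ, hQβ]; rfl
  obtain ⟨hcgf, hmΓ⟩ := hl (by rwa [neg_neg] at hβm)
  rw [hQβ, klDiv_tilted_mul (hΓ hβ), EReal.coe_le_coe_iff, ← hμβ]
  have hgibbs := mul_integral_tilted_sub_cgf_le (hΓ hβ) (interior_subset (hΓ hmΓ))
  rw [← hμβ] at hgibbs
  rw [hsecond] at hcgf
  nlinarith

theorem stmt_10
    (Q₀ : Measure ℝ) [IsProbabilityMeasure Q₀]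
    (hint1 : Integrable (fun x => x) Q₀) (hmean : ∫ x, x ∂Q₀ = 0)
    (hvar : variance id Q₀ = 1)
    (hint3 : Integrable (fun x => x ^ 3) Q₀) (hthird : 0 < ∫ x, x ^ 3 ∂Q₀)
    (Γ : Set ℝ) (hΓopen : IsOpen Γ) (hΓconn : Γ.OrdConnected) (h0Γ : (0 : ℝ) ∈ Γ)
    (hZ : ∀ β ∈ Γ, Integrable (fun x => Real.exp (β * x)) Q₀)
    (Q : ℝ → Measure ℝ)
    (hQ : ∀ β ∈ Γ, Q β = Q₀.withDensity (fun x =>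
      ENNReal.ofReal (Real.exp (β * x) / ∫ y, Real.exp (β * y) ∂Q₀)))
    (μ : ℝ → ℝ) (hμ : ∀ β ∈ Γ, μ β = ∫ x, x ∂(Q β)) :
    ∃ ε > 0, ∀ β ∈ Γ, μ β ∈ Set.Icc (-ε) 0 →
      (((μ β) ^ 2 / 2 : ℝ) : EReal) ≤ klDiv (Q β) Q₀ :=
  stmt_10_general Q₀ hmean hvar hthird Γ hΓopen h0Γ hZ Q hQ μ hμ
end

section
/- Let Exp(1) denote the exponential distribution on (0,∞) with density exp(−x). For every probability measure P on (0,∞) with finite second moment, mean ∫ x dP = 1 and variance v := Var(P) ≤ 1, one has D(P‖Exp(1)) ≥ (v − 1)²/8. -/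
/-!
Donsker–Varadhan: for every `g`, `D(P‖Q) ≥ E_P g - log E_Q e^g`. Take `Q = Exp(1)` and
`g = s W` with `W x = 2 - (x - 2)²`. Since `P` has mean `1`, `E_P W = 1 - Var P`; under `Exp(1)`,
`W` has mean `0` and variance `4`, and for `0 ≤ s ≤ 1/2` in fact `log E_Q e^{sW} ≤ 2 s²`. For the
latter, bound `e^u` by its quadratic Taylor polynomial where `W ≤ 0` (`x > 5`) and by a quartic one
on `(0, 5]`, and integrate the polynomials against `e^{-x}` exactly. With `s = (1 - Var P)/4` the
bound `s (1 - Var P) - 2 s²` equals `(Var P - 1)²/8`.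
-/

open MeasureTheory ProbabilityTheory Real

open Set Polynomial
open scoped Nat ENNReal

lemma hasDerivAt_sum_range_pow_div_factorial (n : ℕ) (u : ℝ) :
    HasDerivAt (fun u : ℝ => ∑ i ∈ Finset.range (n + 1), u ^ i / i !)
      (∑ i ∈ Finset.range n, u ^ i / i !) u := by
  induction n with
  | zero => simpa using hasDerivAt_const u (1 : ℝ)
  | succ n ih =>
    simp only [Finset.sum_range_succ _ (n + 1)]
    refine (ih.add ((hasDerivAt_pow (n + 1) u).div_const ((n + 1)! : ℝ))).congr_deriv ?_
    rw [Finset.sum_range_succ, Nat.factorial_succ]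
    push_cast
    field_simp

lemma exp_le_sum_range_of_nonpos {n : ℕ} (hn : Even n) {u : ℝ} (hu : u ≤ 0) :
    exp u ≤ ∑ i ∈ Finset.range (n + 1), u ^ i / i ! := by
  set T := fun u : ℝ => ∑ i ∈ Finset.range (n + 1), u ^ i / (i ! : ℝ)
  have hanti : Antitone fun u => T u * exp (-u) := by
    refine antitone_of_hasDerivAt_nonpos (f' := fun u => -(u ^ n / n !) * exp (-u))
      (fun u => ?_) (fun u => ?_)
    · refine ((hasDerivAt_sum_range_pow_div_factorial n u).mul
        (hasDerivAt_neg u).exp).congr_deriv ?_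
      rw [Finset.sum_range_succ]
      ring
    · have := hn.pow_nonneg u
      simp only [Pi.zero_apply]
      exact mul_nonpos_of_nonpos_of_nonneg (by simp only [neg_nonpos]; positivity) (exp_pos _).le
  have hT0 : T 0 = 1 := by simp [T, Finset.sum_range_succ']
  have h : 1 ≤ T u * exp (-u) := by simpa [hT0] using hanti hu
  calc exp u ≤ T u * exp (-u) * exp u := le_mul_of_one_le_left (exp_pos u).le h
    _ = T u := by rw [mul_assoc, ← exp_add, neg_add_cancel, exp_zero, mul_one]

lemma exp_le_quadratic_of_nonpos {u : ℝ} (hu : u ≤ 0) : exp u ≤ 1 + u + u ^ 2 / 2 := by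
  simpa [Finset.sum_range_succ] using exp_le_sum_range_of_nonpos (n := 2) even_two hu

lemma exp_le_quartic_of_le_one {u : ℝ} (hu : u ≤ 1) :
    exp u ≤ 1 + u + u ^ 2 / 2 + u ^ 3 / 6 + 5 / 96 * u ^ 4 := by
  rcases le_total u 0 with h | h
  · have := exp_le_sum_range_of_nonpos (n := 4) (by decide) h
    norm_num [Finset.sum_range_succ, Nat.factorial] at this
    nlinarith [pow_nonneg (sq_nonneg u) 2]
  · have := exp_bound' h hu (n := 4) (by norm_num)
    norm_num [Finset.sum_range_succ, Nat.factorial] at this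
    linarith

lemma integral_sub_log_integral_exp_le_integral_llr {α : Type*} [MeasurableSpace α]
    {μ ν : Measure α} [IsProbabilityMeasure μ] [IsProbabilityMeasure ν] {f : α → ℝ}
    (hμν : μ ≪ ν) (hfμ : Integrable f μ) (hfν : Integrable (fun x => exp (f x)) ν)
    (h_int : Integrable (llr μ ν) μ) :
    ∫ x, f x ∂μ - log (∫ x, exp (f x) ∂ν) ≤ ∫ x, llr μ ν x ∂μ := by
  have := isProbabilityMeasure_tilted hfν
  have hgibbs := InformationTheory.integral_llr_add_sub_measure_univ_nonneg
    (hμν.trans (absolutelyContinuous_tilted hfν)) (integrable_llr_tilted_right hμν hfμ h_int hfν)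
  rw [integral_llr_tilted_right hμν hfμ hfν h_int] at hgibbs
  simp only [probReal_univ] at hgibbs
  linarith

lemma integral_sub_log_integral_exp_le_klDiv {α : Type*} [MeasurableSpace α]
    {μ ν : Measure α} [IsProbabilityMeasure μ] [IsProbabilityMeasure ν] {f : α → ℝ}
    (hfμ : Integrable f μ) (hfν : Integrable (fun x => exp (f x)) ν) :
    ((∫ x, f x ∂μ - log (∫ x, exp (f x) ∂ν) : ℝ) : EReal) ≤ klDiv μ ν := by
  unfold klDiv
  split_ifs with h
  · exact EReal.coe_le_coe_iff.2 (integral_sub_log_integral_exp_le_integral_llr h.1 hfμ hfν h.2)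
  · exact le_top

lemma hasDerivAt_neg_eval_mul_exp_neg (S : ℝ[X]) (x : ℝ) :
    HasDerivAt (fun x => -(S.eval x * exp (-x))) ((S - derivative S).eval x * exp (-x)) x := by
  refine ((S.hasDerivAt x).mul (hasDerivAt_neg x).exp).neg.congr_deriv ?_
  simp only [eval_sub]
  ring

lemma intervalIntegral_eval_sub_derivative_mul_exp_neg (S : ℝ[X]) (a b : ℝ) :
    ∫ x in a..b, (S - derivative S).eval x * exp (-x) =
      S.eval a * exp (-a) - S.eval b * exp (-b) := by
  rw [intervalIntegral.integral_eq_sub_of_hasDerivAt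
    (fun x _ => hasDerivAt_neg_eval_mul_exp_neg S x)
    (Continuous.intervalIntegrable (by fun_prop) _ _)]
  ring

lemma integrableOn_pow_mul_exp_neg (n : ℕ) :
    IntegrableOn (fun x : ℝ => x ^ n * exp (-x)) (Ioi 0) := by
  refine (GammaIntegral_convergent (s := n + 1) (by positivity)).congr_fun (fun x _ => ?_)
    measurableSet_Ioi
  simp [mul_comm]

lemma integrableOn_eval_mul_exp_neg (p : ℝ[X]) :
    IntegrableOn (fun x => p.eval x * exp (-x)) (Ioi 0) := by
  induction p using Polynomial.induction_on' with
  | add p q hp hq =>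
    exact (hp.add hq).congr_fun (fun x _ => by simp [add_mul]) measurableSet_Ioi
  | monomial n c =>
    exact IntegrableOn.congr_fun ((integrableOn_pow_mul_exp_neg n).const_mul c)
      (fun x _ => by simp [mul_assoc]) measurableSet_Ioi

lemma integral_Ioi_eval_sub_derivative_mul_exp_neg (S : ℝ[X]) :
    ∫ x in Ioi 0, (S - derivative S).eval x * exp (-x) = S.eval 0 := by
  have hlim := tendsto_zero_of_hasDerivAt_of_integrableOn_Ioi
    (fun x (_ : x ∈ Ioi 0) => hasDerivAt_neg_eval_mul_exp_neg S x)
    (integrableOn_eval_mul_exp_neg _) (integrableOn_eval_mul_exp_neg S).neg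
  rw [integral_Ioi_of_hasDerivAt_of_tendsto' (fun x _ => hasDerivAt_neg_eval_mul_exp_neg S x)
    (integrableOn_eval_mul_exp_neg _) hlim]
  simp

lemma integral_expMeasure_one (g : ℝ → ℝ) :
    ∫ x, g x ∂expMeasure 1 = ∫ x in Ioi 0, g x * exp (-x) := by
  have hdens : ∀ x, (exponentialPDFReal 1 x).toNNReal • g x =
      (Ici 0).indicator (fun x => g x * exp (-x)) x := by
    intro x
    rw [NNReal.smul_def, Real.coe_toNNReal _ (exponentialPDFReal_nonneg one_pos x)]
    by_cases hx : 0 ≤ x <;> simp [exponentialPDFReal, gammaPDFReal, hx, mul_comm]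
  rw [show expMeasure 1 = volume.withDensity fun x => ((exponentialPDFReal 1 x).toNNReal : ℝ≥0∞)
      from rfl,
    integral_withDensity_eq_integral_smul (measurable_exponentialPDFReal 1).real_toNNReal g]
  simp_rw [hdens]
  rw [integral_indicator measurableSet_Ici, integral_Ici_eq_integral_Ioi]

noncomputable def testQuad (x : ℝ) : ℝ := 2 - (x - 2) ^ 2

@[fun_prop]
lemma continuous_testQuad : Continuous testQuad := by
  unfold testQuad; fun_prop

lemma testQuad_le_two (x : ℝ) : testQuad x ≤ 2 := by
  unfold testQuad; nlinarith [sq_nonneg (x - 2)]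

lemma testQuad_nonpos {x : ℝ} (hx : 4 ≤ x) : testQuad x ≤ 0 := by
  unfold testQuad; nlinarith

lemma exp_neg_five_bounds : 0.0067 < exp (-5) ∧ exp (-5) < 0.00674 := by
  have h5 : exp (-5) = exp (-1) ^ 5 := by rw [← exp_nat_mul]; norm_num
  rw [h5]
  constructor
  · calc (0.0067 : ℝ) < 0.36787944116 ^ 5 := by norm_num
      _ < exp (-1) ^ 5 := by gcongr; exact exp_neg_one_gt_d9
  · calc exp (-1) ^ 5 < 0.3678794412 ^ 5 := by gcongr; exact exp_neg_one_lt_d9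
      _ < 0.00674 := by norm_num

lemma intervalIntegral_testQuad_remainder_le {s : ℝ} (hs : 0 ≤ s) :
    ∫ x in (0 : ℝ)..5, ((s * testQuad x) ^ 3 / 6 + 5 / 96 * (s * testQuad x) ^ 4) * exp (-x)
      ≤ 2 * s ^ 4 := by
  -- `Sₖ` is the sum of all derivatives of `testQuad ^ k`, so that `Sₖ - Sₖ' = testQuad ^ k`.
  set S₃ : ℝ[X] := -80 - 72 * X - 60 * X ^ 2 + 16 * X ^ 3 - 24 * X ^ 4 + 6 * X ^ 5 - X ^ 6
  set S₄ : ℝ[X] := 4752 + 4736 * X + 2432 * X ^ 2 + 672 * X ^ 3 + 344 * X ^ 4 - 64 * X ^ 5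
    + 48 * X ^ 6 - 8 * X ^ 7 + X ^ 8
  have hS : ∀ x, (s * testQuad x) ^ 3 / 6 + 5 / 96 * (s * testQuad x) ^ 4 =
      ((s ^ 3 / 6) • S₃ + (5 / 96 * s ^ 4) • S₄
        - derivative ((s ^ 3 / 6) • S₃ + (5 / 96 * s ^ 4) • S₄)).eval x := by
    intro x
    simp [S₃, S₄, testQuad]
    ring
  simp_rw [hS]
  rw [intervalIntegral_eval_sub_derivative_mul_exp_neg]
  simp [S₃, S₄]
  obtain ⟨hlo, hhi⟩ := exp_neg_five_bounds
  have hs3 : 0 ≤ s ^ 3 := by positivity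
  have hs4 : 0 ≤ s ^ 4 := by positivity
  nlinarith

lemma exp_mul_testQuad_le {s x : ℝ} (h0 : 0 ≤ s) (h1 : s ≤ 1 / 2) (hx : 0 < x) :
    exp (s * testQuad x) ≤ 1 + s * testQuad x + (s * testQuad x) ^ 2 / 2
      + (Ioc 0 5).indicator
          (fun x => (s * testQuad x) ^ 3 / 6 + 5 / 96 * (s * testQuad x) ^ 4) x := by
  by_cases h5 : x ≤ 5
  · rw [indicator_of_mem (show x ∈ Ioc 0 5 from ⟨hx, h5⟩)]
    have := exp_le_quartic_of_le_one (u := s * testQuad x) (by nlinarith [testQuad_le_two x])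
    linarith
  · rw [indicator_of_notMem (fun h => h5 h.2), add_zero]
    exact exp_le_quadratic_of_nonpos
      (mul_nonpos_of_nonneg_of_nonpos h0 (testQuad_nonpos (by linarith)))

lemma mgf_testQuad_expMeasure_le {s : ℝ} (h0 : 0 ≤ s) (h1 : s ≤ 1 / 2) :
    mgf testQuad (expMeasure 1) s ≤ exp (2 * s ^ 2) := by
  set T : ℝ → ℝ := fun x => (1 + s * testQuad x + (s * testQuad x) ^ 2 / 2) * exp (-x)
  set R : ℝ → ℝ := fun x => ((s * testQuad x) ^ 3 / 6 + 5 / 96 * (s * testQuad x) ^ 4) * exp (-x)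
  set S : ℝ[X] := 1 + s • (-X ^ 2 + 2 * X) + (s ^ 2 / 2) • (X ^ 4 - 4 * X ^ 3 + 8 * X ^ 2 + 4)
  have hT : T = fun x => (S - derivative S).eval x * exp (-x) := by
    ext x
    simp [T, S, testQuad]
    ring
  have hR : IntegrableOn ((Ioc 0 5).indicator R) (Ioi 0) :=
    ((Continuous.integrableOn_Ioc (by simp only [R]; fun_prop)).integrable_indicator
      measurableSet_Ioc).integrableOn
  calc mgf testQuad (expMeasure 1) s
      = ∫ x in Ioi 0, exp (s * testQuad x) * exp (-x) := integral_expMeasure_one _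
    _ ≤ ∫ x in Ioi 0, (T x + (Ioc 0 5).indicator R x) := by
        refine integral_mono_of_nonneg (ae_of_all _ fun x => by positivity)
          ((hT ▸ integrableOn_eval_mul_exp_neg _).add hR) ?_
        refine (ae_restrict_mem measurableSet_Ioi).mono fun x hx => ?_
        have := mul_le_mul_of_nonneg_right (exp_mul_testQuad_le h0 h1 hx) (exp_pos (-x)).le
        refine this.trans_eq ?_
        rw [add_mul]
        simp only [T, R, indicator_mul_left]
    _ = 1 + 2 * s ^ 2 + ∫ x in (0 : ℝ)..5, R x := by
        rw [integral_add (hT ▸ integrableOn_eval_mul_exp_neg _) hR, hT,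
          integral_Ioi_eval_sub_derivative_mul_exp_neg, setIntegral_indicator measurableSet_Ioc,
          inter_eq_right.mpr Ioc_subset_Ioi_self, ← intervalIntegral.integral_of_le (by norm_num)]
        simp [S]
        ring
    _ ≤ 1 + 2 * s ^ 2 + (2 * s ^ 2) ^ 2 / 2 := by
        have := intervalIntegral_testQuad_remainder_le h0
        linarith
    _ ≤ exp (2 * s ^ 2) := quadratic_le_exp_of_nonneg (by positivity)

lemma testQuad_eq : testQuad = fun x => 4 * x - x ^ 2 - 2 := by
  ext x; unfold testQuad; ring

lemma integrable_testQuad {P : Measure ℝ} [IsFiniteMeasure P]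
    (hint : Integrable (fun x => x ^ 2) P) : Integrable testQuad P := by
  have hid : Integrable id P :=
    ((memLp_two_iff_integrable_sq aestronglyMeasurable_id).2 hint).integrable one_le_two
  rw [testQuad_eq]
  exact ((hid.const_mul 4).sub hint).sub (integrable_const 2)

lemma integral_testQuad {P : Measure ℝ} [IsProbabilityMeasure P]
    (hint : Integrable (fun x => x ^ 2) P) (hmean : ∫ x, x ∂P = 1) :
    ∫ x, testQuad x ∂P = 1 - variance id P := by
  have hmem : MemLp id 2 P := (memLp_two_iff_integrable_sq aestronglyMeasurable_id).2 hint
  have hid : Integrable id P := hmem.integrable one_le_two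
  have h4 : Integrable (fun x : ℝ => 4 * x) P := hid.const_mul 4
  rw [testQuad_eq, integral_sub (f := fun x => 4 * x - x ^ 2) (h4.sub hint) (integrable_const 2),
    integral_sub h4 hint, integral_const_mul, hmean, variance_eq_sub hmem]
  simp [hmean]
  ring

lemma integrable_exp_mul_testQuad {s : ℝ} (hs : 0 ≤ s) :
    Integrable (fun x => exp (s * testQuad x)) (expMeasure 1) := by
  have := isProbabilityMeasure_expMeasure one_pos
  refine Integrable.of_bound (by fun_prop) (exp (2 * s)) (ae_of_all _ fun x => ?_)
  rw [norm_of_nonneg (exp_pos _).le, exp_le_exp]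
  nlinarith [testQuad_le_two x]

lemma cgf_testQuad_expMeasure_le {s : ℝ} (h0 : 0 ≤ s) (h1 : s ≤ 1 / 2) :
    cgf testQuad (expMeasure 1) s ≤ 2 * s ^ 2 := by
  have := isProbabilityMeasure_expMeasure one_pos
  exact (log_le_log (mgf_pos (integrable_exp_mul_testQuad h0))
    (mgf_testQuad_expMeasure_le h0 h1)).trans_eq (log_exp _)

theorem stmt_17_general
    (P : Measure ℝ) [IsProbabilityMeasure P]
    (hint : Integrable (fun x => x ^ 2) P)
    (hmean : ∫ x, x ∂P = 1) (hvar : variance id P ≤ 1) :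
    (((variance id P - 1) ^ 2 / 8 : ℝ) : EReal) ≤ klDiv P (expMeasure 1) := by
  have := isProbabilityMeasure_expMeasure one_pos
  set s := (1 - variance id P) / 4
  have hs0 : 0 ≤ s := by simp only [s]; linarith
  have hcgf := cgf_testQuad_expMeasure_le hs0 (by simp only [s]; linarith [variance_nonneg id P])
  refine le_trans ?_ (integral_sub_log_integral_exp_le_klDiv
    ((integrable_testQuad hint).const_mul s) (integrable_exp_mul_testQuad hs0))
  rw [EReal.coe_le_coe_iff, integral_const_mul, integral_testQuad hint hmean]
  change _ ≤ _ - cgf testQuad (expMeasure 1) s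
  have hs : s * (1 - variance id P) - 2 * s ^ 2 = (variance id P - 1) ^ 2 / 8 := by
    simp only [s]; ring
  linarith

theorem stmt_17
    (P : Measure ℝ) [IsProbabilityMeasure P] (hsupp : P (Set.Iic 0) = 0)
    (hint : Integrable (fun x => x ^ 2) P)
    (hmean : ∫ x, x ∂P = 1) (hvar : variance id P ≤ 1) :
    (((variance id P - 1) ^ 2 / 8 : ℝ) : EReal) ≤ klDiv P (expMeasure 1) :=
  stmt_17_general P hint hmean hvar
end
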